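/- Suppose f : ℝ^m → ℝ is convex and differentiable, g : ℝ^m → ℝ is a function with g(θ) − g(θ₀) ≥ 0 for all θ and g(θ) − g(θ₀) = 0 only at θ = θ₀, and f_n : ℝ^m → ℝ is a sequence of convex functions converging pointwise to g. If θ̂_n minimizes f_n, then θ̂_n → θ₀. -/

import Mathlib

/-!
Convex functions that converge pointwise on a finite-dimensional space are eventually uniformly
bounded above on every ball (a ball sits inside the convex hull of finitely many points), hence,
by a midpoint reflection, eventually uniformly bounded in absolute value, hence eventually
uniformly Lipschitz on a smaller ball; equi-Lipschitz pointwise convergence is locally uniform.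
So if `g` has a strict minimum at `θ₀`, then eventually `f n θ₀ < f n` on the sphere of radius `ε`
about `θ₀`, and convexity of `f n` along segments from `θ₀` forces its minimizers into the ball.
-/

open Filter Metric Set Topology
open scoped NNReal

section Lipschitz

variable {ι α β : Type*} [PseudoMetricSpace α] [PseudoMetricSpace β] {l : Filter ι}
  {f : ι → α → β} {g : α → β} {s : Set α} {K : ℝ≥0}

lemma LipschitzOnWith.of_tendsto [l.NeBot] (hf : ∀ᶠ i in l, LipschitzOnWith K (f i) s)
    (hlim : ∀ x ∈ s, Tendsto (f · x) l (𝓝 (g x))) : LipschitzOnWith K g s :=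
  LipschitzOnWith.of_dist_le_mul fun x hx y hy =>
    le_of_tendsto ((hlim x hx).dist (hlim y hy)) <| hf.mono fun _ hi => hi.dist_le_mul x hx y hy

lemma tendstoUniformlyOn_of_lipschitzOnWith (hs : IsCompact s)
    (hf : ∀ᶠ i in l, LipschitzOnWith K (f i) s) (hg : LipschitzOnWith K g s)
    (hlim : ∀ x ∈ s, Tendsto (f · x) l (𝓝 (g x))) : TendstoUniformlyOn f g l s := by
  rw [Metric.tendstoUniformlyOn_iff]
  intro ε hε
  obtain ⟨δ, hδ, hKδ⟩ := exists_pos_mul_lt (div_pos hε three_pos) K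
  obtain ⟨t, hts, ht, hst⟩ := hs.finite_cover_balls hδ
  have hnet : ∀ᶠ i in l, ∀ p ∈ t, dist (g p) (f i p) < ε / 3 :=
    ht.eventually_all.2 fun p hp => by
      simpa only [dist_comm] using (hlim p (hts hp)).eventually (ball_mem_nhds _ (by positivity))
  filter_upwards [hf, hnet] with i hfi hi x hx
  obtain ⟨p, hp, hxp⟩ := mem_iUnion₂.1 (hst hx)
  have hxp' : dist x p ≤ δ := (mem_ball.1 hxp).le
  calc dist (g x) (f i x) ≤ dist (g x) (g p) + dist (g p) (f i p) + dist (f i p) (f i x) :=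
        dist_triangle4 _ _ _ _
    _ ≤ K * δ + dist (g p) (f i p) + K * δ := by
        gcongr
        · exact (hg.dist_le_mul x hx p (hts hp)).trans (by gcongr)
        · exact (hfi.dist_le_mul p (hts hp) x hx).trans (by rw [dist_comm]; gcongr)
    _ < ε := by linarith [hi p hp]
end Lipschitz

section Convex

variable {ι E : Type*} [NormedAddCommGroup E] [NormedSpace ℝ E] {l : Filter ι}
  {f : ι → E → ℝ} {g : E → ℝ}

lemma ConvexOn.dist_lt_of_le_of_forall_sphere_lt {h : E → ℝ} (hh : ConvexOn ℝ univ h) {x₀ x : E}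
    {ε : ℝ} (hε : 0 < ε) (hsphere : ∀ s ∈ sphere x₀ ε, h x₀ < h s) (hx : h x ≤ h x₀) :
    dist x x₀ < ε := by
  by_contra! hεx
  have hd : 0 < dist x₀ x := by rw [dist_comm]; linarith
  set s := AffineMap.lineMap x₀ x (ε / dist x₀ x)
  have hs : s ∈ sphere x₀ ε := by
    rw [mem_sphere, dist_lineMap_left, Real.norm_of_nonneg (by positivity), div_mul_cancel₀ _ hd.ne']
  have hseg : s ∈ segment ℝ x₀ x :=
    lineMap_mem_segment ℝ x₀ x ⟨by positivity, (div_le_one hd).2 (by rwa [dist_comm])⟩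
  have := hh.le_on_segment (mem_univ _) (mem_univ _) hseg
  linarith [hsphere s hs, max_le le_rfl hx]

variable [FiniteDimensional ℝ E]

lemma exists_eventually_le_on_closedBall_of_convexOn (hf : ∀ i, ConvexOn ℝ univ (f i))
    (hlim : ∀ x, Tendsto (f · x) l (𝓝 (g x))) (x₀ : E) (r : ℝ) :
    ∃ M, ∀ᶠ i in l, ∀ x ∈ closedBall x₀ r, f i x ≤ M := by
  obtain ⟨u, hu, -⟩ := (convex_closedBall x₀ r).exists_subset_interior_convexHull_finset_of_isCompact
    (isCompact_closedBall x₀ r) (univ_mem (f := 𝓝ˢ _))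
  obtain ⟨M, hM⟩ := (u.finite_toSet.image g).bddAbove
  refine ⟨M + 1, ?_⟩
  have hvert : ∀ᶠ i in l, ∀ v ∈ (u : Set E), f i v < M + 1 :=
    u.finite_toSet.eventually_all.2 fun v hv =>
      (hlim v).eventually_lt_const ((hM (mem_image_of_mem g hv)).trans_lt (lt_add_one M))
  filter_upwards [hvert] with i hi x hx
  obtain ⟨v, hv, hxv⟩ := (hf i).exists_ge_of_mem_convexHull (subset_univ _) (interior_subset (hu hx))
  exact hxv.trans (hi v hv).le

lemma exists_eventually_abs_le_on_closedBall_of_convexOn (hf : ∀ i, ConvexOn ℝ univ (f i))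
    (hlim : ∀ x, Tendsto (f · x) l (𝓝 (g x))) (x₀ : E) (r : ℝ) :
    ∃ M, ∀ᶠ i in l, ∀ x ∈ closedBall x₀ r, |f i x| ≤ M := by
  obtain ⟨M, hM⟩ := exists_eventually_le_on_closedBall_of_convexOn hf hlim x₀ r
  refine ⟨max M (M - 2 * (g x₀ - 1)), ?_⟩
  filter_upwards [hM, (hlim x₀).eventually_const_lt (sub_one_lt (g x₀))] with i hi hi₀ x hx
  -- `x₀` is the midpoint of `x` and its reflection `2 • x₀ - x`, which lies in the same ball.
  have hx' : 2 • x₀ - x ∈ closedBall x₀ r := by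
    rwa [mem_closedBall, dist_eq_norm, ← norm_neg, show -(2 • x₀ - x - x₀) = x - x₀ by module,
      ← dist_eq_norm]
  have hmid := (hf i).2 (mem_univ x) (mem_univ (2 • x₀ - x)) (by norm_num : (0 : ℝ) ≤ 1 / 2)
    (by norm_num : (0 : ℝ) ≤ 1 / 2) (by norm_num)
  rw [show (1 / 2 : ℝ) • x + (1 / 2 : ℝ) • (2 • x₀ - x) = x₀ by module, smul_eq_mul,
    smul_eq_mul] at hmid
  rw [abs_le]
  constructor <;> linarith [hi x hx, hi _ hx', le_max_left M (M - 2 * (g x₀ - 1)),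
    le_max_right M (M - 2 * (g x₀ - 1))]

lemma exists_eventually_lipschitzOnWith_ball_of_convexOn (hf : ∀ i, ConvexOn ℝ univ (f i))
    (hlim : ∀ x, Tendsto (f · x) l (𝓝 (g x))) (x₀ : E) (r : ℝ) :
    ∃ K, ∀ᶠ i in l, LipschitzOnWith K (f i) (ball x₀ r) := by
  obtain ⟨M, hM⟩ := exists_eventually_abs_le_on_closedBall_of_convexOn hf hlim x₀ (r + 1)
  refine ⟨(2 * M / 1).toNNReal, hM.mono fun i hi => ?_⟩
  simpa using ((hf i).subset (subset_univ _) (convex_ball x₀ (r + 1))).lipschitzOnWith_of_abs_le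
    one_pos fun a ha => hi a (mem_closedBall.2 ha.le)

theorem tendstoLocallyUniformly_of_convexOn [l.NeBot] (hf : ∀ i, ConvexOn ℝ univ (f i))
    (hlim : ∀ x, Tendsto (f · x) l (𝓝 (g x))) : TendstoLocallyUniformly f g l := by
  rw [← tendstoLocallyUniformlyOn_univ]
  refine tendstoLocallyUniformlyOn_of_forall_exists_nhds fun x₀ _ =>
    ⟨closedBall x₀ 1, by simpa using closedBall_mem_nhds x₀ one_pos, ?_⟩
  obtain ⟨K, hK⟩ := exists_eventually_lipschitzOnWith_ball_of_convexOn hf hlim x₀ 2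
  have hK' : ∀ᶠ i in l, LipschitzOnWith K (f i) (closedBall x₀ 1) :=
    hK.mono fun i hi => hi.mono (closedBall_subset_ball one_lt_two)
  exact tendstoUniformlyOn_of_lipschitzOnWith (isCompact_closedBall x₀ 1) hK'
    (.of_tendsto hK' fun x _ => hlim x) fun x _ => hlim x

theorem tendsto_of_isMinOn_of_convexOn [l.NeBot] (hf : ∀ i, ConvexOn ℝ univ (f i))
    (hfg : TendstoLocallyUniformly f g l) {x₀ : E} (hg : ∀ x ≠ x₀, g x₀ < g x) {θ : ι → E}
    (hθ : ∀ i, IsMinOn (f i) univ (θ i)) : Tendsto θ l (𝓝 x₀) := by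
  rw [Metric.tendsto_nhds]
  intro ε hε
  have hgc : Continuous g := hfg.continuous <| Frequently.of_forall fun i =>
    continuousOn_univ.1 ((hf i).continuousOn isOpen_univ)
  obtain ⟨c, hc, hcg⟩ := (isCompact_sphere x₀ ε).exists_forall_le' hgc.continuousOn
    fun s hs => hg s (ne_of_mem_sphere hs hε.ne')
  have hunif := Metric.tendstoUniformlyOn_iff.1
    (tendstoLocallyUniformly_iff_forall_isCompact.1 hfg _ (isCompact_closedBall x₀ ε))
    ((c - g x₀) / 2) (by linarith)
  filter_upwards [hunif] with i hi
  refine (hf i).dist_lt_of_le_of_forall_sphere_lt hε (fun s hs => ?_) (hθ i (mem_univ x₀))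
  have h₀ := hi x₀ (mem_closedBall_self hε.le)
  have hs' := hi s (sphere_subset_closedBall hs)
  rw [Real.dist_eq, abs_lt] at h₀ hs'
  linarith [hcg s hs]

end Convex

theorem stmt_12_general (m : ℕ) (g : (Fin m → ℝ) → ℝ) (θ₀ : Fin m → ℝ)
    (hg : ∀ θ, 0 ≤ g θ - g θ₀) (hg0 : ∀ θ, g θ - g θ₀ = 0 → θ = θ₀)
    (fn : ℕ → (Fin m → ℝ) → ℝ) (hfn : ∀ n, ConvexOn ℝ Set.univ (fn n))
    (hlim : ∀ θ, Filter.Tendsto (fun n => fn n θ) Filter.atTop (nhds (g θ)))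
    (θhat : ℕ → Fin m → ℝ) (hmin : ∀ n, IsMinOn (fn n) Set.univ (θhat n)) :
    Filter.Tendsto θhat Filter.atTop (nhds θ₀) :=
  tendsto_of_isMinOn_of_convexOn hfn (tendstoLocallyUniformly_of_convexOn hfn hlim)
    (fun θ hθ => lt_of_le_of_ne (sub_nonneg.1 (hg θ)) fun h => hθ (hg0 θ (by rw [h, sub_self])))
    hmin

theorem stmt_12 (m : ℕ) (f g : (Fin m → ℝ) → ℝ) (θ₀ : Fin m → ℝ)
    (hf : ConvexOn ℝ Set.univ f) (hf' : Differentiable ℝ f)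
    (hg : ∀ θ, 0 ≤ g θ - g θ₀) (hg0 : ∀ θ, g θ - g θ₀ = 0 → θ = θ₀)
    (fn : ℕ → (Fin m → ℝ) → ℝ) (hfn : ∀ n, ConvexOn ℝ Set.univ (fn n))
    (hlim : ∀ θ, Filter.Tendsto (fun n => fn n θ) Filter.atTop (nhds (g θ)))
    (θhat : ℕ → Fin m → ℝ) (hmin : ∀ n, IsMinOn (fn n) Set.univ (θhat n)) :
    Filter.Tendsto θhat Filter.atTop (nhds θ₀) :=
  stmt_12_general m g θ₀ hg hg0 fn hfn hlim θhat hmin
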